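/- Any triangle in the Euclidean plane whose three side lengths are all at least 1 and whose area is at most 1/4 has two angles each of measure at most π/6. -/

import Mathlib

open Real EuclideanGeometry

noncomputable def triArea (A B C : EuclideanSpace ℝ (Fin 2)) : ℝ :=
  |(B 0 - A 0) * (C 1 - A 1) - (B 1 - A 1) * (C 0 - A 0)| / 2

/-!
Twice the area equals `sin α · b · c` at every vertex, so sides of length at least 1 and area at
most 1/4 force `sin ≤ 1/2` at all three vertices. Hence every angle is at most `π/6` or at least
`5π/6`; as the angles sum to `π`, at most one of them is of the second kind.
-/

lemma InnerProductGeometry.sin_angle_mul_norm_mul_norm_eq_abs_cross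
    (x y : EuclideanSpace ℝ (Fin 2)) :
    sin (InnerProductGeometry.angle x y) * (‖x‖ * ‖y‖) = |x 0 * y 1 - x 1 * y 0| := by
  have inner_eq (a b : EuclideanSpace ℝ (Fin 2)) : inner ℝ a b = a 0 * b 0 + a 1 * b 1 := by
    simp [PiLp.inner_apply, Fin.sum_univ_two, mul_comm]
  rw [InnerProductGeometry.sin_angle_mul_norm_mul_norm, inner_eq, inner_eq, inner_eq,
    ← sqrt_sq_eq_abs]
  congr 1
  ring

lemma triArea_comm_right (A B C : EuclideanSpace ℝ (Fin 2)) : triArea A C B = triArea A B C := by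
  rw [triArea, triArea, ← abs_neg]
  ring_nf

lemma triArea_rotate (A B C : EuclideanSpace ℝ (Fin 2)) : triArea B C A = triArea A B C := by
  rw [triArea, triArea]
  ring_nf

lemma sin_angle_mul_dist_mul_dist (A B C : EuclideanSpace ℝ (Fin 2)) :
    sin (∠ B A C) * (dist A B * dist A C) = 2 * triArea A B C := by
  rw [dist_comm A B, dist_comm A C, dist_eq_norm, dist_eq_norm, EuclideanGeometry.angle,
    vsub_eq_sub, vsub_eq_sub, InnerProductGeometry.sin_angle_mul_norm_mul_norm_eq_abs_cross,
    triArea]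
  simp only [PiLp.sub_apply]
  ring

lemma sin_angle_le_two_mul_triArea {A B C : EuclideanSpace ℝ (Fin 2)}
    (hAB : 1 ≤ dist A B) (hAC : 1 ≤ dist A C) : sin (∠ B A C) ≤ 2 * triArea A B C := by
  have hsin : 0 ≤ sin (∠ B A C) := sin_nonneg_of_nonneg_of_le_pi (angle_nonneg _ _ _)
    (angle_le_pi _ _ _)
  calc sin (∠ B A C) ≤ sin (∠ B A C) * (dist A B * dist A C) :=
        le_mul_of_one_le_right hsin (one_le_mul_of_one_le_of_one_le hAB hAC)
    _ = 2 * triArea A B C := sin_angle_mul_dist_mul_dist A B C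

lemma Real.le_pi_div_six_of_sin_le_one_half {θ : ℝ} (h0 : -(π / 2) ≤ θ) (hπ : θ ≤ π / 2)
    (hsin : sin θ ≤ 1 / 2) : θ ≤ π / 6 := by
  have arcsin_one_half : arcsin (1 / 2) = π / 6 := by
    rw [← sin_pi_div_six, arcsin_sin] <;> linarith [pi_pos]
  simpa only [arcsin_sin h0 hπ, arcsin_one_half] using arcsin_le_arcsin hsin

lemma Real.le_pi_div_six_or_five_pi_div_six_le_of_sin_le_one_half {θ : ℝ} (h0 : 0 ≤ θ)
    (hπ : θ ≤ π) (hsin : sin θ ≤ 1 / 2) : θ ≤ π / 6 ∨ 5 * π / 6 ≤ θ := by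
  rcases le_total θ (π / 2) with hθ | hθ
  · exact Or.inl (le_pi_div_six_of_sin_le_one_half (by linarith [pi_pos]) hθ hsin)
  · have := le_pi_div_six_of_sin_le_one_half (θ := π - θ) (by linarith) (by linarith)
      (by rwa [sin_pi_sub])
    exact Or.inr (by linarith)

lemma angle_le_pi_div_six_or_five_pi_div_six_le {A B C : EuclideanSpace ℝ (Fin 2)}
    (hAB : 1 ≤ dist A B) (hAC : 1 ≤ dist A C) (harea : triArea A B C ≤ 1 / 4) :
    ∠ B A C ≤ π / 6 ∨ 5 * π / 6 ≤ ∠ B A C :=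
  le_pi_div_six_or_five_pi_div_six_le_of_sin_le_one_half (angle_nonneg _ _ _)
    (angle_le_pi _ _ _) (by linarith [sin_angle_le_two_mul_triArea hAB hAC])

theorem stmt_1_general (A B C : EuclideanSpace ℝ (Fin 2))
    (hAB : 1 ≤ dist A B) (hBC : 1 ≤ dist B C) (hCA : 1 ≤ dist C A)
    (harea : triArea A B C ≤ 1 / 4) :
    (∠ B A C ≤ π / 6 ∧ ∠ A B C ≤ π / 6) ∨
    (∠ B A C ≤ π / 6 ∧ ∠ A C B ≤ π / 6) ∨
    (∠ A B C ≤ π / 6 ∧ ∠ A C B ≤ π / 6) := by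
  have hA := angle_le_pi_div_six_or_five_pi_div_six_le hAB (dist_comm C A ▸ hCA) harea
  have hB := angle_le_pi_div_six_or_five_pi_div_six_le (dist_comm A B ▸ hAB) hBC
    (by rwa [triArea_comm_right, triArea_rotate])
  have hC := angle_le_pi_div_six_or_five_pi_div_six_le hCA (dist_comm B C ▸ hBC)
    (by rwa [triArea_rotate, triArea_rotate])
  have hBA : B ≠ A := by rintro rfl; simp at hAB; linarith
  have hsum := angle_add_angle_add_angle_eq_pi C hBA
  rw [angle_comm B C A, angle_comm C A B] at hsum
  have hA₀ := angle_nonneg B A C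
  have hB₀ := angle_nonneg A B C
  have hC₀ := angle_nonneg A C B
  rcases hA with hA | hA <;> rcases hB with hB | hB <;> rcases hC with hC | hC <;>
    first | tauto | (exfalso; linarith [pi_pos])

theorem stmt_1 (A B C : EuclideanSpace ℝ (Fin 2))
    (hncol : ¬ Collinear ℝ ({A, B, C} : Set (EuclideanSpace ℝ (Fin 2))))
    (hAB : 1 ≤ dist A B) (hBC : 1 ≤ dist B C) (hCA : 1 ≤ dist C A)
    (harea : triArea A B C ≤ 1 / 4) :
    (∠ B A C ≤ π / 6 ∧ ∠ A B C ≤ π / 6) ∨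
    (∠ B A C ≤ π / 6 ∧ ∠ A C B ≤ π / 6) ∨
    (∠ A B C ≤ π / 6 ∧ ∠ A C B ≤ π / 6) :=
  stmt_1_general A B C hAB hBC hCA harea
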